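/- Let (A, ·_{α,β}, p_ω, q_ω) be a BiHom-Ω-associative algebra and M a vector space equipped with families of bilinear maps •_{α,β} : M ⊗ M → M, ▷_{α,β} : A ⊗ M → M, ◁_{α,β} : M ⊗ A → M and commuting families p^M_ω, q^M_ω : M → M. Define on A ⊕ M the operation (x,m) ∗_{α,β} (x',m') = (x ·_{α,β} x', x ▷_{α,β} m' + m ◁_{α,β} x' + m •_{α,β} m') with structure maps p_α(x,m) = (p_α(x), p^M_α(m)), q_α(x,m) = (q_α(x), q^M_α(m)). Then (A ⊕ M, ∗_{α,β}, p_ω, q_ω) is a BiHom-Ω-associative algebra if and only if: (M, ▷_{α,β}, ◁_{α,β}, p^M_ω, q^M_ω) is a bimodule over A, (M, •_{α,β}, p^M_ω, q^M_ω) is a BiHom-Ω-associative algebra, and for all x ∈ A, m, m' ∈ M, α,β,γ ∈ Ω: p_α(x) ▷_{α,βγ} (m •_{β,γ} m') = (x ▷_{α,β} m) •_{αβ,γ} q^M_γ(m'), p^M_α(m) •_{α,βγ} (m' ◁_{β,γ} x) = (m •_{α,β} m') ◁_{αβ,γ} q_γ(x), and p^M_α(m) •_{α,βγ} (x ▷_{β,γ}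 m') = (m ◁_{α,β} x) •_{αβ,γ} q^M_γ(m'). -/
import Mathlib


/-- A BiHom-`Ω`-associative algebra structure. -/
def IsBiHomAssoc {k Ω A : Type*} [CommRing k] [Semigroup Ω]
    [AddCommGroup A] [Module k A]
    (mul : Ω → Ω → A →ₗ[k] A →ₗ[k] A) (p q : Ω → A →ₗ[k] A) : Prop :=
  (∀ α β x, p α (q β x) = q β (p α x)) ∧
  (∀ α β x y, p (α * β) (mul α β x y) = mul α β (p α x) (p β y)) ∧
  (∀ α β x y, q (α * β) (mul α β x y) = mul α β (q α x) (q β y)) ∧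
  (∀ α β γ x y z,
    mul α (β * γ) (p α x) (mul β γ y z) = mul (α * β) γ (mul α β x y) (q γ z))

/-- A bimodule over a BiHom-`Ω`-associative algebra. -/
def IsBiHomBimodule {k Ω A M : Type*} [CommRing k] [Semigroup Ω]
    [AddCommGroup A] [Module k A] [AddCommGroup M] [Module k M]
    (mul : Ω → Ω → A →ₗ[k] A →ₗ[k] A) (p q : Ω → A →ₗ[k] A)
    (l : Ω → Ω → A →ₗ[k] M →ₗ[k] M) (r : Ω → Ω → M →ₗ[k] A →ₗ[k] M)
    (pM qM : Ω → M →ₗ[k] M) : Prop :=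
  (∀ α β x m, pM (α * β) (l α β x m) = l α β (p α x) (pM β m)) ∧
  (∀ α β x m, qM (α * β) (l α β x m) = l α β (q α x) (qM β m)) ∧
  (∀ α β γ x x' m,
    l α (β * γ) (p α x) (l β γ x' m) = l (α * β) γ (mul α β x x') (qM γ m)) ∧
  (∀ α β m x, pM (α * β) (r α β m x) = r α β (pM α m) (p β x)) ∧
  (∀ α β m x, qM (α * β) (r α β m x) = r α β (qM α m) (q β x)) ∧
  (∀ α β γ m x x',
    r α (β * γ) (pM α m) (mul β γ x x') = r (α * β) γ (r α β m x) (q γ x')) ∧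
  (∀ α β γ x m x',
    l α (β * γ) (p α x) (r β γ m x') = r (α * β) γ (l α β x m) (q γ x'))

/-- The multiplication on `A ⊕ M` of the bimodule-algebra construction:
`(x,m) ∗ (x',m') = (x·x', x ▷ m' + m ◁ x' + m • m')`. -/
def bimoduleAlgMul {k Ω A M : Type*} [CommRing k] [Semigroup Ω]
    [AddCommGroup A] [Module k A] [AddCommGroup M] [Module k M]
    (mul : Ω → Ω → A →ₗ[k] A →ₗ[k] A)
    (l : Ω → Ω → A →ₗ[k] M →ₗ[k] M) (r : Ω → Ω → M →ₗ[k] A →ₗ[k] M)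
    (mulM : Ω → Ω → M →ₗ[k] M →ₗ[k] M)
    (α β : Ω) : (A × M) →ₗ[k] (A × M) →ₗ[k] (A × M) :=
  LinearMap.mk₂ k
    (fun u v => (mul α β u.1 v.1, l α β u.1 v.2 + r α β u.2 v.1 + mulM α β u.2 v.2))
    (fun u u' v => by simp [Prod.ext_iff]; abel)
    (fun c u v => by simp [Prod.ext_iff, smul_add])
    (fun u v v' => by simp [Prod.ext_iff]; abel)
    (fun c u v => by simp [Prod.ext_iff, smul_add])

/-- `(A ⊕ M, ∗, p ⊕ pM, q ⊕ qM)` is a BiHom-`Ω`-associative algebra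
if and only if `M` is a bimodule over `A`, `(M, mulM, pM, qM)` is a
BiHom-`Ω`-associative algebra and the three compatibility conditions between the
actions and the multiplication of `M` hold. -/
theorem bimoduleAlg_iff
    {k Ω A M : Type*} [CommRing k] [Semigroup Ω]
    [AddCommGroup A] [Module k A] [AddCommGroup M] [Module k M]
    (mul : Ω → Ω → A →ₗ[k] A →ₗ[k] A) (p q : Ω → A →ₗ[k] A)
    (l : Ω → Ω → A →ₗ[k] M →ₗ[k] M) (r : Ω → Ω → M →ₗ[k] A →ₗ[k] M)
    (mulM : Ω → Ω → M →ₗ[k] M →ₗ[k] M)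
    (pM qM : Ω → M →ₗ[k] M)
    (hA : IsBiHomAssoc mul p q)
    (hcomm : ∀ α β m, pM α (qM β m) = qM β (pM α m)) :
    IsBiHomAssoc (bimoduleAlgMul mul l r mulM)
        (fun ω => (p ω).prodMap (pM ω)) (fun ω => (q ω).prodMap (qM ω))
      ↔ (IsBiHomBimodule mul p q l r pM qM ∧
          IsBiHomAssoc mulM pM qM ∧
          (∀ α β γ x m m',
            l α (β * γ) (p α x) (mulM β γ m m')
              = mulM (α * β) γ (l α β x m) (qM γ m')) ∧
          (∀ α β γ m m' x,
            mulM α (β * γ) (pM α m) (r β γ m' x)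
              = r (α * β) γ (mulM α β m m') (q γ x)) ∧
          (∀ α β γ m x m',
            mulM α (β * γ) (pM α m) (l β γ x m')
              = mulM (α * β) γ (r α β m x) (qM γ m'))) := by
  constructor
  · intro H
    obtain ⟨Hc, Hp, Hq, Ha⟩ := H
    have hpl : ∀ α β x m, pM (α * β) (l α β x m) = l α β (p α x) (pM β m) := by
      intro α β x m
      have := Hp α β (x, 0) ((0 : A), m)
      simpa [bimoduleAlgMul, Prod.ext_iff] using congrArg Prod.snd this
    have hql : ∀ α β x m, qM (α * β) (l α β x m) = l α β (q α x) (qM β m) := by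
      intro α β x m
      have := Hq α β (x, 0) ((0 : A), m)
      simpa [bimoduleAlgMul, Prod.ext_iff] using congrArg Prod.snd this
    have hpr : ∀ α β m x, pM (α * β) (r α β m x) = r α β (pM α m) (p β x) := by
      intro α β m x
      have := Hp α β ((0 : A), m) (x, 0)
      simpa [bimoduleAlgMul, Prod.ext_iff] using congrArg Prod.snd this
    have hqr : ∀ α β m x, qM (α * β) (r α β m x) = r α β (qM α m) (q β x) := by
      intro α β m x
      have := Hq α β ((0 : A), m) (x, 0)
      simpa [bimoduleAlgMul, Prod.ext_iff] using congrArg Prod.snd this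
    have hpm : ∀ α β m m', pM (α * β) (mulM α β m m') = mulM α β (pM α m) (pM β m') := by
      intro α β m m'
      have := Hp α β ((0 : A), m) ((0 : A), m')
      simpa [bimoduleAlgMul, Prod.ext_iff] using congrArg Prod.snd this
    have hqm : ∀ α β m m', qM (α * β) (mulM α β m m') = mulM α β (qM α m) (qM β m') := by
      intro α β m m'
      have := Hq α β ((0 : A), m) ((0 : A), m')
      simpa [bimoduleAlgMul, Prod.ext_iff] using congrArg Prod.snd this
    have hll : ∀ α β γ x x' m,
        l α (β * γ) (p α x) (l β γ x' m) = l (α * β) γ (mul α β x x') (qM γ m) := by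
      intro α β γ x x' m
      have := Ha α β γ (x, 0) (x', 0) ((0 : A), m)
      simpa [bimoduleAlgMul, Prod.ext_iff] using congrArg Prod.snd this
    have hrr : ∀ α β γ m x x',
        r α (β * γ) (pM α m) (mul β γ x x') = r (α * β) γ (r α β m x) (q γ x') := by
      intro α β γ m x x'
      have := Ha α β γ ((0 : A), m) (x, 0) (x', 0)
      simpa [bimoduleAlgMul, Prod.ext_iff] using congrArg Prod.snd this
    have hlr : ∀ α β γ x m x',
        l α (β * γ) (p α x) (r β γ m x') = r (α * β) γ (l α β x m) (q γ x') := by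
      intro α β γ x m x'
      have := Ha α β γ (x, 0) ((0 : A), m) (x', 0)
      simpa [bimoduleAlgMul, Prod.ext_iff] using congrArg Prod.snd this
    have hmm : ∀ α β γ m m' m'',
        mulM α (β * γ) (pM α m) (mulM β γ m' m'') = mulM (α * β) γ (mulM α β m m') (qM γ m'') := by
      intro α β γ m m' m''
      have := Ha α β γ ((0 : A), m) ((0 : A), m') ((0 : A), m'')
      simpa [bimoduleAlgMul, Prod.ext_iff] using congrArg Prod.snd this
    have h1 : ∀ α β γ x m m',
        l α (β * γ) (p α x) (mulM β γ m m') = mulM (α * β) γ (l α β x m) (qM γ m') := by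
      intro α β γ x m m'
      have := Ha α β γ (x, 0) ((0 : A), m) ((0 : A), m')
      simpa [bimoduleAlgMul, Prod.ext_iff] using congrArg Prod.snd this
    have h2 : ∀ α β γ m m' x,
        mulM α (β * γ) (pM α m) (r β γ m' x) = r (α * β) γ (mulM α β m m') (q γ x) := by
      intro α β γ m m' x
      have := Ha α β γ ((0 : A), m) ((0 : A), m') (x, 0)
      simpa [bimoduleAlgMul, Prod.ext_iff] using congrArg Prod.snd this
    have h3 : ∀ α β γ m x m',
        mulM α (β * γ) (pM α m) (l β γ x m') = mulM (α * β) γ (r α β m x) (qM γ m') := by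
      intro α β γ m x m'
      have := Ha α β γ ((0 : A), m) (x, 0) ((0 : A), m')
      simpa [bimoduleAlgMul, Prod.ext_iff] using congrArg Prod.snd this
    exact ⟨⟨hpl, hql, hll, hpr, hqr, hrr, hlr⟩, ⟨hcomm, hpm, hqm, hmm⟩, h1, h2, h3⟩
  · rintro ⟨⟨hpl, hql, hll, hpr, hqr, hrr, hlr⟩, ⟨_, hpm, hqm, hmm⟩, h1, h2, h3⟩
    obtain ⟨hAc, hAp, hAq, hAa⟩ := hA
    refine ⟨?_, ?_, ?_, ?_⟩
    · intro α β x
      simp [Prod.ext_iff, hAc, hcomm]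
    · rintro α β ⟨x, m⟩ ⟨x', m'⟩
      simp [bimoduleAlgMul, Prod.ext_iff, hAp, hpl, hpr, hpm]
    · rintro α β ⟨x, m⟩ ⟨x', m'⟩
      simp [bimoduleAlgMul, Prod.ext_iff, hAq, hql, hqr, hqm]
    · rintro α β γ ⟨x, m⟩ ⟨x', m'⟩ ⟨x'', m''⟩
      simp only [bimoduleAlgMul, LinearMap.mk₂_apply, LinearMap.prodMap_apply, Prod.ext_iff,
        LinearMap.add_apply, map_add, hAa, hll, hrr, hlr, hmm, h1, h2, h3]
      exact ⟨trivial, by abel⟩
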